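/- Let $p$ be prime, $\ell \geq 0$, $n \geq 1$, and let $f : \mathbb{Z}_p^n \to \mathbb{C}$ be constant on cosets of $p^\ell \mathbb{Z}_p^n$, inducing $f' : (\mathbb{Z}/p^\ell\mathbb{Z})^n \to \mathbb{C}$. Then for any $u \in \mathbb{P}\mathbb{Z}_p^{n-1}$, the X-ray transform $f_u$ on $Q_u = \mathbb{Z}_p^n/\langle u \rangle$ is constant on cosets of $p^\ell Q_u$, and the induced function on $Q_u / p^\ell Q_u \cong (\mathbb{Z}/p^\ell\mathbb{Z})^{n-1}$ equals the discrete X-ray transform of $f'$ along $u \bmod p^\ell$: $f'_u(\bar x) = p^{-\ell} \sum_{t \in \mathbb{Z}/p^\ell\mathbb{Z}} f'(\bar x + t \bar u)$. -/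

import Mathlib

/-! Reduction mod `p^ℓ` pushes the Haar probability measure of `ℤ_p` forward to the uniform
measure on `ℤ/p^ℓℤ`, because its fibres are translates of one another. Since `t ↦ f (x + t u)`
factors through `t mod p^ℓ`, the integral defining `f_u x` is the average of `f'` over the
discrete line `x̄ + (ℤ/p^ℓℤ) ū`, and a sum over a line does not change when `x̄` moves along `ū`. -/

open MeasureTheory

noncomputable section

instance (p : ℕ) [Fact p.Prime] : MeasurableSpace ℤ_[p] := borel _
instance (p : ℕ) [Fact p.Prime] : BorelSpace ℤ_[p] := ⟨rfl⟩

/-- The Haar probability measure on `ℤ_p`. -/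
def haarZp (p : ℕ) [Fact p.Prime] : Measure ℤ_[p] :=
  Measure.addHaarMeasure ⟨⟨Set.univ, isCompact_univ⟩, by simp⟩

/-- The X-ray transform of `f` along `u`, lifted to `ℤ_p^n` (being invariant under
translation by `u`, it descends to the quotient `Q_u = ℤ_p^n/⟨u⟩`). -/
def xray (p : ℕ) [Fact p.Prime] (n : ℕ) (f : (Fin n → ℤ_[p]) → ℂ)
    (u : Fin n → ℤ_[p]) (x : Fin n → ℤ_[p]) : ℂ :=
  ∫ t, f (x + t • u) ∂(haarZp p)

open scoped ENNReal

section FiniteQuotient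

variable {G H E : Type*} [AddGroup G] [MeasurableSpace G] [MeasurableAdd G] {μ : Measure G}
  [IsProbabilityMeasure μ] [μ.IsAddLeftInvariant] [AddGroup H] [Fintype H]
  [NormedAddCommGroup E] [NormedSpace ℝ E] [CompleteSpace E]
  {φ : G →+ H}

theorem measure_preimage_singleton_eq_inv_card (hφ : Function.Surjective φ)
    (hmeas : ∀ c, MeasurableSet (φ ⁻¹' {c})) (c : H) :
    μ (φ ⁻¹' {c}) = (Fintype.card H : ℝ≥0∞)⁻¹ := by
  have fiber_eq_zero_fiber (c : H) : μ (φ ⁻¹' {c}) = μ (φ ⁻¹' {0}) := by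
    obtain ⟨g, hg⟩ := hφ (-c)
    have : φ ⁻¹' {c} = (g + ·) ⁻¹' (φ ⁻¹' {0}) := by
      ext t
      simp only [Set.mem_preimage, Set.mem_singleton_iff, map_add, hg]
      rw [neg_add_eq_zero, eq_comm]
    rw [this, measure_preimage_add]
  have total : ∑ c : H, μ (φ ⁻¹' {c}) = 1 := by
    rw [sum_measure_preimage_singleton _ fun c _ => hmeas c]
    simp
  simp only [fiber_eq_zero_fiber, Finset.sum_const, Finset.card_univ, nsmul_eq_mul] at total
  rw [fiber_eq_zero_fiber]
  exact ENNReal.eq_inv_of_mul_eq_one_left ((mul_comm _ _).trans total)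

theorem integral_comp_eq_inv_card_smul_sum (hφ : Function.Surjective φ)
    (hmeas : ∀ c, MeasurableSet (φ ⁻¹' {c})) (g : H → E) :
    ∫ t, g (φ t) ∂μ = (Fintype.card H : ℝ)⁻¹ • ∑ c, g c := by
  classical
  have g_comp_eq_sum :
      (fun t => g (φ t)) = fun t => ∑ c, (φ ⁻¹' {c}).indicator (fun _ => g c) t := by
    funext t
    rw [Finset.sum_eq_single (φ t)] <;> simp +contextual [eq_comm]
  rw [g_comp_eq_sum, integral_finsetSum _ fun c _ => (integrable_const (g c)).indicator (hmeas c),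
    Finset.smul_sum]
  refine Finset.sum_congr rfl fun c _ => ?_
  rw [integral_indicator_const _ (hmeas c), measureReal_def,
    measure_preimage_singleton_eq_inv_card hφ hmeas, ENNReal.toReal_inv, ENNReal.toReal_natCast]

end FiniteQuotient

section LineSum

variable (R : Type*) {M E : Type*} [Ring R] [Fintype R] [AddCommGroup M] [Module R M]
  [AddCommMonoid E]

def lineSum (F : M → E) (u x : M) : E := ∑ c : R, F (x + c • u)

variable {R}

theorem lineSum_add_smul (F : M → E) (u x : M) (s : R) :
    lineSum R F u (x + s • u) = lineSum R F u x := by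
  unfold lineSum
  refine Fintype.sum_equiv (Equiv.addLeft s) _ _ fun c => ?_
  simp only [Equiv.coe_addLeft, add_smul, add_assoc]

end LineSum

theorem ZMod.sum_natCast_fin {E : Type*} [AddCommMonoid E] (N : ℕ) [NeZero N] (F : ZMod N → E) :
    ∑ t : Fin N, F ((t : ℕ) : ZMod N) = ∑ c : ZMod N, F c := by
  refine Fintype.sum_bijective _ ?_ _ _ fun _ => rfl
  refine (Fintype.bijective_iff_surjective_and_card _).2 ⟨fun c => ?_, by simp⟩
  exact ⟨⟨c.val, c.val_lt⟩, ZMod.natCast_zmod_val c⟩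

namespace PadicInt

variable {p : ℕ} [Fact p.Prime]

theorem toZModPow_eq_zero_iff_dvd (ℓ : ℕ) (x : ℤ_[p]) :
    toZModPow ℓ x = 0 ↔ (p : ℤ_[p]) ^ ℓ ∣ x := by
  rw [← RingHom.mem_ker, ker_toZModPow, Ideal.mem_span_singleton]

theorem toZModPow_preimage_singleton (ℓ : ℕ) (a : ℤ_[p]) :
    toZModPow ℓ ⁻¹' {toZModPow ℓ a} = Metric.closedBall a ((p : ℝ) ^ (-ℓ : ℤ)) := by
  ext t
  simp only [Set.mem_preimage, Set.mem_singleton_iff, Metric.mem_closedBall, dist_eq_norm,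
    norm_le_pow_iff_mem_span_pow, ← ker_toZModPow, RingHom.mem_ker, map_sub, sub_eq_zero]

theorem measurableSet_toZModPow_preimage_singleton (ℓ : ℕ) (c : ZMod (p ^ ℓ)) :
    MeasurableSet (toZModPow (p := p) ℓ ⁻¹' {c}) := by
  obtain ⟨a, rfl⟩ := ZMod.ringHom_surjective (toZModPow ℓ) c
  rw [toZModPow_preimage_singleton]
  exact measurableSet_closedBall

end PadicInt

section Haar

variable (p : ℕ) [Fact p.Prime]

instance : IsProbabilityMeasure (haarZp p) :=
  ⟨Measure.addHaarMeasure_self⟩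

instance : (haarZp p).IsAddLeftInvariant := by
  unfold haarZp
  infer_instance

theorem integral_comp_toZModPow {E : Type*} [NormedAddCommGroup E] [NormedSpace ℝ E]
    [CompleteSpace E] (ℓ : ℕ) (g : ZMod (p ^ ℓ) → E) :
    ∫ t, g (PadicInt.toZModPow ℓ t) ∂(haarZp p) = ((p : ℝ) ^ ℓ)⁻¹ • ∑ c, g c := by
  simpa [ZMod.card] using integral_comp_eq_inv_card_smul_sum (μ := haarZp p)
    (φ := (PadicInt.toZModPow ℓ).toAddMonoidHom) (ZMod.ringHom_surjective _)
    (PadicInt.measurableSet_toZModPow_preimage_singleton ℓ) g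

theorem xray_eq_lineSum (n ℓ : ℕ) (f : (Fin n → ℤ_[p]) → ℂ) (f' : (Fin n → ZMod (p ^ ℓ)) → ℂ)
    (hf : ∀ x, f x = f' (fun i => PadicInt.toZModPow ℓ (x i))) (u x : Fin n → ℤ_[p]) :
    xray p n f u x = ((p : ℂ) ^ ℓ)⁻¹ *
      lineSum (ZMod (p ^ ℓ)) f' (fun i => PadicInt.toZModPow ℓ (u i))
        (fun i => PadicInt.toZModPow ℓ (x i)) := by
  have integrand (t : ℤ_[p]) : f (x + t • u) = f' (fun i => PadicInt.toZModPow ℓ (x i) +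
      PadicInt.toZModPow ℓ t * PadicInt.toZModPow ℓ (u i)) := by
    simp [hf]
  simp only [xray, integrand, integral_comp_toZModPow p ℓ (fun c => f' fun i =>
    PadicInt.toZModPow ℓ (x i) + c * PadicInt.toZModPow ℓ (u i)), Complex.real_smul, lineSum]
  push_cast
  rfl

end Haar

theorem xray_locally_constant_general (p : ℕ) [Fact p.Prime] (n ℓ : ℕ)
    (f : (Fin n → ℤ_[p]) → ℂ) (f' : (Fin n → ZMod (p ^ ℓ)) → ℂ)
    (hf : ∀ x, f x = f' (fun i => PadicInt.toZModPow ℓ (x i)))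
    (u : Fin n → ℤ_[p]) :
    (∀ x y : Fin n → ℤ_[p],
      (∃ s : ℤ_[p], ∀ i, (p : ℤ_[p]) ^ ℓ ∣ (x i - y i - s * u i)) →
        xray p n f u x = xray p n f u y) ∧
    (∀ x : Fin n → ℤ_[p],
      xray p n f u x = (1 / ((p : ℂ) ^ ℓ)) *
        ∑ t : Fin (p ^ ℓ),
          f' (fun i => PadicInt.toZModPow ℓ (x i) +
            ((t : ℕ) : ZMod (p ^ ℓ)) * PadicInt.toZModPow ℓ (u i))) := by
  refine ⟨fun x y ⟨s, hs⟩ => ?_, fun x => ?_⟩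
  · have x_mod_eq : (fun i => PadicInt.toZModPow ℓ (x i)) =
        (fun i => PadicInt.toZModPow ℓ (y i)) + PadicInt.toZModPow ℓ s •
          fun i => PadicInt.toZModPow ℓ (u i) := by
      funext i
      have hi := (PadicInt.toZModPow_eq_zero_iff_dvd ℓ _).2 (hs i)
      rw [map_sub, map_sub, map_mul, sub_sub, sub_eq_zero] at hi
      exact hi
    rw [xray_eq_lineSum p n ℓ f f' hf, xray_eq_lineSum p n ℓ f f' hf, x_mod_eq,
      lineSum_add_smul]
  · rw [xray_eq_lineSum p n ℓ f f' hf, lineSum, one_div, ← ZMod.sum_natCast_fin]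
    rfl

/-- If `f : ℤ_p^n → ℂ` is constant on cosets of `p^ℓ ℤ_p^n`, inducing
`f' : (ℤ/p^ℓℤ)^n → ℂ`, then for `u ∈ ℙℤ_p^{n-1}` the X-ray transform `f_u` is constant
on cosets of `p^ℓ Q_u` (lifted: constant on cosets of `p^ℓ ℤ_p^n + ℤ_p u`), and the
induced function on `Q_u/p^ℓ Q_u ≅ (ℤ/p^ℓℤ)^{n-1}` is the discrete X-ray transform of
`f'` along `u mod p^ℓ`: `f'_u(x̄) = p^{-ℓ} ∑_{t ∈ ℤ/p^ℓℤ} f'(x̄ + t ū)`. -/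
theorem xray_locally_constant (p : ℕ) [Fact p.Prime] (n ℓ : ℕ) (hn : 1 ≤ n)
    (f : (Fin n → ℤ_[p]) → ℂ) (f' : (Fin n → ZMod (p ^ ℓ)) → ℂ)
    (hf : ∀ x, f x = f' (fun i => PadicInt.toZModPow ℓ (x i)))
    (u : Fin n → ℤ_[p]) (hu : ∃ i, IsUnit (u i)) :
    (∀ x y : Fin n → ℤ_[p],
      (∃ s : ℤ_[p], ∀ i, (p : ℤ_[p]) ^ ℓ ∣ (x i - y i - s * u i)) →
        xray p n f u x = xray p n f u y) ∧
    (∀ x : Fin n → ℤ_[p],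
      xray p n f u x = (1 / ((p : ℂ) ^ ℓ)) *
        ∑ t : Fin (p ^ ℓ),
          f' (fun i => PadicInt.toZModPow ℓ (x i) +
            ((t : ℕ) : ZMod (p ^ ℓ)) * PadicInt.toZModPow ℓ (u i))) :=
  xray_locally_constant_general p n ℓ f f' hf u

end
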